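/- With h defined on the closed strip S̄ = {z : 1/2 ≤ Im z ≤ 1} by h(x+iy) = h_y(x)x + iy as above, the Jacobian determinant of h, where it exists, equals h_y(x) + h_y'(x)·x and is at least 1 almost everywhere in S. -/

import Mathlib

/-!
Off the null set made of the line `y = 3/4`, the boundary of the diamond and the lines `|x| = y`,
the slice function `hy` agrees near each point of the strip with `a(y) + c(y)·x` for smooth `a`, `c`
(on the two middle pieces, `|x|` is locally `±x`). There `H` is differentiable with a triangular
Jacobian whose determinant is `∂ₓ(hy·x) = hy + x·∂ₓhy = a + 2cx`, and the linear pieces of `hy`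
were chosen so that this is at least `1`: outside the diamond one has `|x| > y - 1/2` below
`y = 3/4` and `|x| > 1 - y` above it.
-/

open Set MeasureTheory

/-- The slice function `h_y`: 1 on the slice of the diamond `W₀`, 4 for `|x| ≥ y`,
and linear in `|x|` in between. -/
noncomputable def hy (y x : ℝ) : ℝ :=
  if |x| + |y - 3/4| < 1/4 then 1
  else if y ≤ |x| then 4
  else if y ≤ 3/4 then 6 * |x| - 6 * y + 4
  else (3 * |x| + 5 * y - 4) / (2 * y - 1)

/-- The map `h(x + iy) = h_y(x)·x + iy`, viewed as a map of `ℝ²`. -/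
noncomputable def H : ℝ × ℝ → ℝ × ℝ := fun q => (hy q.2 q.1 * q.1, q.2)

/-- The open strip `S = {(x, y) : 1/2 < y < 1}`. -/
def Sopen : Set (ℝ × ℝ) := {q : ℝ × ℝ | 1/2 < q.2 ∧ q.2 < 1}

open Filter Topology

theorem ContinuousLinearMap.det_eq_fst_apply_of_snd_apply (L : (ℝ × ℝ) →L[ℝ] ℝ × ℝ)
    (h : ∀ u, (L u).2 = u.2) : L.det = (L (1, 0)).1 := by
  change LinearMap.det (L : ℝ × ℝ →ₗ[ℝ] ℝ × ℝ) = _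
  rw [← LinearMap.det_toMatrix (Module.Basis.finTwoProd ℝ), Matrix.det_fin_two]
  simp [LinearMap.toMatrix_apply, h]

theorem det_fderiv_mul_fst_prodMk_snd {g : ℝ × ℝ → ℝ} {q : ℝ × ℝ}
    (hg : DifferentiableAt ℝ g q) :
    (fderiv ℝ (fun p => (g p * p.1, p.2)) q).det =
      g q + deriv (fun x => g (x, q.2)) q.1 * q.1 := by
  have hslice : HasDerivAt (fun x => g (x, q.2)) (fderiv ℝ g q (1, 0)) q.1 :=
    hg.hasFDerivAt.comp_hasDerivAt q.1 ((hasDerivAt_id q.1).prodMk (hasDerivAt_const _ _))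
  have hH : HasFDerivAt (fun p : ℝ × ℝ => (g p * p.1, p.2))
      ((g q • ContinuousLinearMap.fst ℝ ℝ ℝ + q.1 • fderiv ℝ g q).prod
        (ContinuousLinearMap.snd ℝ ℝ ℝ)) q :=
    (hg.hasFDerivAt.mul hasFDerivAt_fst).prodMk hasFDerivAt_snd
  rw [hH.fderiv,
    ContinuousLinearMap.det_eq_fst_apply_of_snd_apply _ (fun u => by simp), hslice.deriv]
  simp [mul_comm]

theorem deriv_slice_of_eventuallyEq {g : ℝ × ℝ → ℝ} {a c : ℝ → ℝ} {q : ℝ × ℝ}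
    (h : g =ᶠ[𝓝 q] fun p => a p.2 + c p.2 * p.1) :
    deriv (fun x => g (x, q.2)) q.1 = c q.2 := by
  have hslice : (fun x => g (x, q.2)) =ᶠ[𝓝 q.1] fun x => a q.2 + c q.2 * x :=
    (Continuous.prodMk_left q.2).continuousAt.eventually h
  rw [hslice.deriv_eq]
  simp

theorem volume_setOf_snd_eq_eq_zero {f : ℝ → ℝ} (hf : Measurable f) :
    volume {q : ℝ × ℝ | q.2 = f q.1} = 0 := by
  have hmeas : MeasurableSet {q : ℝ × ℝ | q.2 = f q.1} :=
    measurableSet_eq_fun measurable_snd (hf.comp measurable_fst)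
  rw [Measure.volume_eq_prod, Measure.prod_apply hmeas]
  simp [preimage]

theorem ae_snd_ne {f : ℝ → ℝ} (hf : Measurable f) : ∀ᵐ q : ℝ × ℝ, q.2 ≠ f q.1 := by
  simpa [ae_iff] using volume_setOf_snd_eq_eq_zero hf

theorem exists_eventually_abs_eq_mul {x : ℝ} (hx : x ≠ 0) :
    ∃ ε : ℝ, ∀ᶠ t in 𝓝 x, |t| = ε * t := by
  rcases hx.lt_or_gt with hneg | hpos
  · exact ⟨-1, (eventually_lt_nhds hneg).mono fun t ht => by rw [abs_of_neg ht]; ring⟩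
  · exact ⟨1, (eventually_gt_nhds hpos).mono fun t ht => by rw [abs_of_pos ht]; ring⟩

theorem hy_eq_one {y x : ℝ} (h : |x| + |y - 3/4| < 1/4) : hy y x = 1 := if_pos h

theorem hy_eq_four {y x : ℝ} (h : y ≤ |x|) : hy y x = 4 := by
  have : 1/4 ≤ |x| + |y - 3/4| := by linarith [neg_le_abs (y - 3/4)]
  rw [hy, if_neg this.not_gt, if_pos h]

theorem hy_eq_of_le_three_quarters {y x : ℝ} (hd : 1/4 ≤ |x| + |y - 3/4|) (hx : |x| < y)
    (hy' : y ≤ 3/4) : hy y x = 6 * |x| - 6 * y + 4 := by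
  rw [hy, if_neg hd.not_gt, if_neg hx.not_ge, if_pos hy']

theorem hy_eq_of_three_quarters_lt {y x : ℝ} (hd : 1/4 ≤ |x| + |y - 3/4|) (hx : |x| < y)
    (hy' : 3/4 < y) : hy y x = (3 * |x| + 5 * y - 4) / (2 * y - 1) := by
  rw [hy, if_neg hd.not_gt, if_neg hx.not_ge, if_neg hy'.not_ge]

def HyAffineNear (q : ℝ × ℝ) (a c : ℝ → ℝ) : Prop :=
  DifferentiableAt ℝ a q.2 ∧ DifferentiableAt ℝ c q.2 ∧
    (fun p : ℝ × ℝ => hy p.2 p.1) =ᶠ[𝓝 q] fun p => a p.2 + c p.2 * p.1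

theorem exists_hyAffineNear_of_mem_diamond {q : ℝ × ℝ} (h : |q.1| + |q.2 - 3/4| < 1/4) :
    ∃ a c, HyAffineNear q a c ∧ 1 ≤ a q.2 + 2 * c q.2 * q.1 := by
  have hreg : ∀ᶠ p : ℝ × ℝ in 𝓝 q, |p.1| + |p.2 - 3/4| < 1/4 :=
    ContinuousAt.eventually_lt (by fun_prop) continuousAt_const h
  refine ⟨fun _ => 1, fun _ => 0, ⟨differentiableAt_const _, differentiableAt_const _, ?_⟩,
    by simp⟩
  filter_upwards [hreg] with p hp
  simp [hy_eq_one hp]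

theorem exists_hyAffineNear_of_lt_abs {q : ℝ × ℝ} (h : q.2 < |q.1|) :
    ∃ a c, HyAffineNear q a c ∧ 1 ≤ a q.2 + 2 * c q.2 * q.1 := by
  have hreg : ∀ᶠ p : ℝ × ℝ in 𝓝 q, p.2 < |p.1| :=
    ContinuousAt.eventually_lt (by fun_prop) (by fun_prop) h
  refine ⟨fun _ => 4, fun _ => 0, ⟨differentiableAt_const _, differentiableAt_const _, ?_⟩,
    by norm_num⟩
  filter_upwards [hreg] with p hp
  simp [hy_eq_four hp.le]

theorem exists_hyAffineNear_of_lt_three_quarters {q : ℝ × ℝ} (hlow : 1/2 < q.2)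
    (hd : 1/4 < |q.1| + |q.2 - 3/4|) (hx : |q.1| < q.2) (hy' : q.2 < 3/4) :
    ∃ a c, HyAffineNear q a c ∧ 1 ≤ a q.2 + 2 * c q.2 * q.1 := by
  have hgap : q.2 - 1/2 < |q.1| := by
    rw [abs_of_neg (by linarith : q.2 - 3/4 < 0)] at hd; linarith
  obtain ⟨ε, hε⟩ := exists_eventually_abs_eq_mul (abs_pos.1 (by linarith : 0 < |q.1|))
  have hreg : ∀ᶠ p : ℝ × ℝ in 𝓝 q,
      1/4 < |p.1| + |p.2 - 3/4| ∧ |p.1| < p.2 ∧ p.2 < 3/4 ∧ |p.1| = ε * p.1 :=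
    Eventually.and (ContinuousAt.eventually_lt continuousAt_const (by fun_prop) hd) <|
      Eventually.and (ContinuousAt.eventually_lt (by fun_prop) (by fun_prop) hx) <|
        Eventually.and (ContinuousAt.eventually_lt (by fun_prop) continuousAt_const hy') <|
          continuousAt_fst.eventually hε
  refine ⟨fun y => 4 - 6 * y, fun _ => 6 * ε, ⟨by fun_prop, differentiableAt_const _, ?_⟩, ?_⟩
  · filter_upwards [hreg] with p ⟨hpd, hpx, hpy, hpε⟩
    rw [hy_eq_of_le_three_quarters hpd.le hpx hpy.le, hpε]
    ring
  · linarith [hε.self_of_nhds]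

theorem exists_hyAffineNear_of_three_quarters_lt {q : ℝ × ℝ} (hup : q.2 < 1)
    (hd : 1/4 < |q.1| + |q.2 - 3/4|) (hx : |q.1| < q.2) (hy' : 3/4 < q.2) :
    ∃ a c, HyAffineNear q a c ∧ 1 ≤ a q.2 + 2 * c q.2 * q.1 := by
  have hgap : 1 - q.2 < |q.1| := by
    rw [abs_of_pos (by linarith : 0 < q.2 - 3/4)] at hd; linarith
  obtain ⟨ε, hε⟩ := exists_eventually_abs_eq_mul (abs_pos.1 (by linarith : 0 < |q.1|))
  have hreg : ∀ᶠ p : ℝ × ℝ in 𝓝 q,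
      1/4 < |p.1| + |p.2 - 3/4| ∧ |p.1| < p.2 ∧ 3/4 < p.2 ∧ |p.1| = ε * p.1 :=
    Eventually.and (ContinuousAt.eventually_lt continuousAt_const (by fun_prop) hd) <|
      Eventually.and (ContinuousAt.eventually_lt (by fun_prop) (by fun_prop) hx) <|
        Eventually.and (ContinuousAt.eventually_lt continuousAt_const (by fun_prop) hy') <|
          continuousAt_fst.eventually hε
  have hden : 0 < 2 * q.2 - 1 := by linarith
  refine ⟨fun y => (5 * y - 4) / (2 * y - 1), fun y => 3 * ε / (2 * y - 1),
    ⟨by fun_prop (disch := exact hden.ne'), by fun_prop (disch := exact hden.ne'), ?_⟩, ?_⟩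
  · filter_upwards [hreg] with p ⟨hpd, hpx, hpy, hpε⟩
    rw [hy_eq_of_three_quarters_lt hpd.le hpx hpy, hpε]
    ring
  · have hjac : (5 * q.2 - 4) / (2 * q.2 - 1) + 2 * (3 * ε / (2 * q.2 - 1)) * q.1 =
        (5 * q.2 - 4 + 6 * |q.1|) / (2 * q.2 - 1) := by
      rw [hε.self_of_nhds]; ring
    rw [hjac, le_div_iff₀ hden]
    linarith

theorem ae_exists_hyAffineNear :
    ∀ᵐ q ∂(volume.restrict Sopen), ∃ a c, HyAffineNear q a c ∧ 1 ≤ a q.2 + 2 * c q.2 * q.1 := by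
  have hmeas : MeasurableSet Sopen := by
    unfold Sopen
    exact (measurableSet_lt measurable_const measurable_snd).inter
      (measurableSet_lt measurable_snd measurable_const)
  have hdiam : ∀ᵐ q : ℝ × ℝ, |q.1| + |q.2 - 3/4| ≠ 1/4 := by
    filter_upwards [ae_snd_ne (f := fun x => 1 - |x|) (by fun_prop),
      ae_snd_ne (f := fun x => 1/2 + |x|) (by fun_prop)] with q hup hlow heq
    rcases abs_cases (q.2 - 3/4) with ⟨h, _⟩ | ⟨h, _⟩ <;> rw [h] at heq
    exacts [hup (by linarith), hlow (by linarith)]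
  filter_upwards [ae_restrict_mem hmeas, ae_restrict_of_ae hdiam,
    ae_restrict_of_ae (ae_snd_ne (f := fun _ => 3/4) measurable_const),
    ae_restrict_of_ae (ae_snd_ne (f := fun x => |x|) measurable_abs)]
    with q hq hd h34 habs
  rcases hd.lt_or_gt with hin | hout
  · exact exists_hyAffineNear_of_mem_diamond hin
  rcases habs.lt_or_gt with hgt | hlt
  · exact exists_hyAffineNear_of_lt_abs hgt
  rcases h34.lt_or_gt with hbelow | habove
  · exact exists_hyAffineNear_of_lt_three_quarters hq.1 hout hlt hbelow
  · exact exists_hyAffineNear_of_three_quarters_lt hq.2 hout hlt habove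

theorem stmt3 :
    ∀ᵐ q ∂(volume.restrict Sopen), DifferentiableAt ℝ H q →
      (fderiv ℝ H q).det = hy q.2 q.1 + deriv (fun x => hy q.2 x) q.1 * q.1 ∧
      1 ≤ (fderiv ℝ H q).det := by
  filter_upwards [ae_exists_hyAffineNear] with q ⟨a, c, ⟨ha, hc, hloc⟩, hbound⟩ _
  have hdiff : DifferentiableAt ℝ (fun p : ℝ × ℝ => hy p.2 p.1) q :=
    ((ha.comp q differentiableAt_snd).add
      ((hc.comp q differentiableAt_snd).mul differentiableAt_fst)).congr_of_eventuallyEq hloc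
  have hdet : (fderiv ℝ H q).det = hy q.2 q.1 + deriv (fun x => hy q.2 x) q.1 * q.1 :=
    det_fderiv_mul_fst_prodMk_snd hdiff
  have hval : hy q.2 q.1 = a q.2 + c q.2 * q.1 := hloc.self_of_nhds
  refine ⟨hdet, ?_⟩
  rw [hdet, deriv_slice_of_eventuallyEq hloc, hval]
  linarith
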